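/- arXiv:math/0206025 — 3 statements merged into one kernel-verified Lean document; each statement's English description precedes it below -/
import Mathlib

section
/- Let V be an idempotent b-space over a b-complete idempotent semifield K and let W ⊆ V be a wo-closed subsemigroup (closed under sup and inf of linearly ordered subsets). Then sup X ∈ W for every subset X ⊆ W that is bounded above in V; in particular every wo-closed subspace is b-closed. -/
/-- An idempotent semifield: a semiring with idempotent addition in which every
nonzero element is invertible, given by explicit data and axioms. -/
structure IdemSemifield (K : Type*) where
  add : K → K → K
  mul : K → K → K
  zero : K
  one : K
  add_assoc : ∀ a b c, add (add a b) c = add a (add b c)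
  add_comm : ∀ a b, add a b = add b a
  add_idem : ∀ a, add a a = a
  mul_assoc : ∀ a b c, mul (mul a b) c = mul a (mul b c)
  one_mul : ∀ a, mul one a = a
  mul_one : ∀ a, mul a one = a
  zero_add : ∀ a, add zero a = a
  zero_mul : ∀ a, mul zero a = zero
  mul_zero : ∀ a, mul a zero = zero
  zero_ne_one : zero ≠ one
  left_distrib : ∀ a b c, mul a (add b c) = add (mul a b) (mul a c)
  right_distrib : ∀ a b c, mul (add a b) c = add (mul a c) (mul b c)
  inv_exists : ∀ a, a ≠ zero → ∃ b, mul a b = one ∧ mul b a = one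

namespace IdemSemifield
variable {K : Type*} (F : IdemSemifield K)

/-- The standard order `a ≼ b ⟺ a ⊕ b = b`. -/
def le (a b : K) : Prop := F.add a b = b
/-- `b` is an upper bound of `X`. -/
def IsUB (X : Set K) (b : K) : Prop := ∀ x ∈ X, F.le x b
/-- `b` is a lower bound of `X`. -/
def IsLB (X : Set K) (b : K) : Prop := ∀ x ∈ X, F.le b x
/-- `s` is the least upper bound of `X`. -/
def IsSup (X : Set K) (s : K) : Prop := F.IsUB X s ∧ ∀ b, F.IsUB X b → F.le s b
/-- `s` is the greatest lower bound of `X`. -/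
def IsInf (X : Set K) (s : K) : Prop := F.IsLB X s ∧ ∀ b, F.IsLB X b → F.le b s
/-- b-completeness: every subset bounded above (including `∅`) has a least
upper bound. -/
def BComplete : Prop := ∀ X : Set K, (∃ b, F.IsUB X b) → ∃ s, F.IsSup X s
/-- `n`-th multiplicative power. -/
def npow (a : K) : ℕ → K
  | 0 => F.one
  | n + 1 => F.mul a (npow a n)
/-- Algebraic closedness (radicability): existence of `n`-th roots. -/
def AlgClosed : Prop := ∀ (a : K) (n : ℕ), 0 < n → ∃ y, F.npow y n = a

end IdemSemifield

/-- An idempotent semimodule (idempotent space) over an idempotent semifield,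
given by explicit data and axioms. -/
structure IdemSpace (K V : Type*) (F : IdemSemifield K) where
  add : V → V → V
  smul : K → V → V
  zero : V
  add_assoc : ∀ x y z, add (add x y) z = add x (add y z)
  add_comm : ∀ x y, add x y = add y x
  add_idem : ∀ x, add x x = x
  zero_add : ∀ x, add zero x = x
  smul_smul : ∀ a b x, smul a (smul b x) = smul (F.mul a b) x
  one_smul : ∀ x, smul F.one x = x
  add_smul : ∀ a b x, smul (F.add a b) x = add (smul a x) (smul b x)
  smul_add : ∀ a x y, smul a (add x y) = add (smul a x) (smul a y)
  zero_smul : ∀ x, smul F.zero x = zero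
  smul_zero : ∀ a, smul a zero = zero

namespace IdemSpace
variable {K V : Type*} {F : IdemSemifield K} (M : IdemSpace K V F)

/-- The standard order on the space. -/
def le (x y : V) : Prop := M.add x y = y
def IsUB (X : Set V) (b : V) : Prop := ∀ x ∈ X, M.le x b
def IsLB (X : Set V) (b : V) : Prop := ∀ x ∈ X, M.le b x
def IsSup (X : Set V) (s : V) : Prop := M.IsUB X s ∧ ∀ b, M.IsUB X b → M.le s b
def IsInf (X : Set V) (s : V) : Prop := M.IsLB X s ∧ ∀ b, M.IsLB X b → M.le b s
/-- A linearly ordered subset. -/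
def IsChain (X : Set V) : Prop := ∀ x ∈ X, ∀ y ∈ X, M.le x y ∨ M.le y x

/-- `M` is an idempotent b-space: it is b-complete and scalar multiplication is
compatible with suprema and infima of nonempty bounded subsets of scalars. -/
def IsBSpace : Prop :=
  (∀ X : Set V, (∃ b, M.IsUB X b) → ∃ s, M.IsSup X s) ∧
  (∀ (Q : Set K) (x : V) (s : K), Q.Nonempty → F.IsSup Q s →
    M.IsSup ((fun k => M.smul k x) '' Q) (M.smul s x)) ∧
  (∀ (Q : Set K) (x : V) (s : K), Q.Nonempty → F.IsInf Q s →
    M.IsInf ((fun k => M.smul k x) '' Q) (M.smul s x))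

/-- A b-linear operator: preserves suprema of (bounded) subsets and commutes
with scalar multiplication. -/
def IsBLinear (f : V → V) : Prop :=
  (∀ (X : Set V) (s : V), M.IsSup X s → M.IsSup (f '' X) (f s)) ∧
  (∀ (k : K) (x : V), f (M.smul k x) = M.smul k (f x))

/-- An Archimedean element. -/
def IsArchElem (x : V) : Prop := ∀ y : V, ∃ lam : K, M.le y (M.smul lam x)

/-- `xs` is the functional `x*`, `x* (y) = inf {k : k ⊙ x ≽ y}`. -/
def IsStarOf (x : V) (xs : V → K) : Prop :=
  ∀ y : V, F.IsInf {k : K | M.le y (M.smul k x)} (xs y)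

/-- `x` is a wo-continuous Archimedean element: it is Archimedean and `x*`
preserves suprema and infima of bounded linearly ordered subsets. -/
def IsWoContArchElem (x : V) : Prop :=
  M.IsArchElem x ∧
  ∃ xs : V → K, M.IsStarOf x xs ∧
    (∀ (C : Set V) (s : V), M.IsChain C → M.IsSup C s → F.IsSup (xs '' C) (xs s)) ∧
    (∀ (C : Set V) (s : V), M.IsChain C → M.IsInf C s → F.IsInf (xs '' C) (xs s))

/-- An Archimedean space: a b-space containing a wo-continuous Archimedean
element. -/
def IsArchSpace : Prop := M.IsBSpace ∧ ∃ x : V, M.IsWoContArchElem x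

end IdemSpace

/-!
Among the elements of `W` below `s = sup X`, bounded chains have suprema that stay in `W`
and below `s`, so Zorn's lemma gives a maximal one, `m`. For `x ∈ X` the element `x ⊕ m` is
again in `W` and below `s`, so maximality forces `x ≼ m`. Thus `m` is an upper bound of `X`,
hence `s ≼ m ≼ s` and `s = m ∈ W`.
-/

namespace IdemSpace

variable {K V : Type*} {F : IdemSemifield K} (M : IdemSpace K V F)

theorem le_refl (x : V) : M.le x x := M.add_idem x

theorem le_trans {x y z : V} (hxy : M.le x y) (hyz : M.le y z) : M.le x z := by
  unfold le at *
  rw [← hyz, ← M.add_assoc, hxy]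

theorem le_antisymm {x y : V} (hxy : M.le x y) (hyx : M.le y x) : x = y := by
  unfold le at *
  rw [← hyx, M.add_comm, hxy]

theorem le_add_left (x y : V) : M.le x (M.add x y) := by
  unfold le
  rw [← M.add_assoc, M.add_idem]

theorem le_add_right (x y : V) : M.le y (M.add x y) := by
  rw [M.add_comm]
  exact M.le_add_left y x

theorem add_le {x y z : V} (hxz : M.le x z) (hyz : M.le y z) : M.le (M.add x y) z := by
  unfold le at *
  rw [M.add_assoc, hyz, hxz]

abbrev toPartialOrder : PartialOrder V where
  le := M.le
  le_refl := M.le_refl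
  le_trans _ _ _ := M.le_trans
  le_antisymm _ _ := M.le_antisymm

variable {M}

theorem exists_maximal_mem_le
    (hV : ∀ C : Set V, M.IsChain C → (∃ b, M.IsUB C b) → ∃ t, M.IsSup C t)
    {W : Set V} (hW : ∀ C ⊆ W, M.IsChain C → ∀ t, M.IsSup C t → t ∈ W) (s : V) :
    ∃ m ∈ W, M.le m s ∧ ∀ y ∈ W, M.le y s → M.le m y → M.le y m := by
  let _ : PartialOrder V := M.toPartialOrder
  obtain ⟨m, ⟨hmW, hms⟩, hmax⟩ := zorn_le₀ {y | y ∈ W ∧ M.le y s} <| by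
    intro C hCs hC
    have hCchain : M.IsChain C := fun x hx y hy => hC.total hx hy
    obtain ⟨t, ht⟩ := hV C hCchain ⟨s, fun z hz => (hCs hz).2⟩
    exact ⟨t, ⟨hW C (fun z hz => (hCs hz).1) hCchain t ht, ht.2 s fun z hz => (hCs hz).2⟩, ht.1⟩
  exact ⟨m, hmW, hms, fun y hyW hys hmy => hmax ⟨hyW, hys⟩ hmy⟩

theorem mem_of_isSup_of_subset
    (hV : ∀ C : Set V, M.IsChain C → (∃ b, M.IsUB C b) → ∃ t, M.IsSup C t)
    {W : Set V} (hWadd : ∀ x ∈ W, ∀ y ∈ W, M.add x y ∈ W)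
    (hW : ∀ C ⊆ W, M.IsChain C → ∀ t, M.IsSup C t → t ∈ W)
    {X : Set V} (hXW : X ⊆ W) {s : V} (hs : M.IsSup X s) : s ∈ W := by
  obtain ⟨m, hmW, hms, hmax⟩ := exists_maximal_mem_le hV hW s
  have hXm : M.IsUB X m := fun x hx =>
    M.le_trans (M.le_add_left x m)
      (hmax _ (hWadd x (hXW hx) m hmW) (M.add_le (hs.1 x hx) hms) (M.le_add_right x m))
  rwa [M.le_antisymm (hs.2 m hXm) hms]

end IdemSpace

theorem wo_closed_subsemigroup_is_b_closed_general {K V : Type*} (F : IdemSemifield K)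
    (M : IdemSpace K V F) (hM : M.IsBSpace)
    (W : Set V)
    (hWadd : ∀ x ∈ W, ∀ y ∈ W, M.add x y ∈ W)
    (hWwo : ∀ X : Set V, X ⊆ W → M.IsChain X →
      (∀ s, M.IsSup X s → s ∈ W) ∧ (∀ s, M.IsInf X s → s ∈ W)) :
    ∀ X : Set V, X ⊆ W → (∃ b, M.IsUB X b) → ∀ s, M.IsSup X s → s ∈ W :=
  fun _ hXW _ _ hs =>
    IdemSpace.mem_of_isSup_of_subset (fun C _ hC => hM.1 C hC) hWadd
      (fun C hCW hC => (hWwo C hCW hC).1) hXW hs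

/-- if `V` is an idempotent b-space over a b-complete idempotent
semifield and `W ⊆ V` is a wo-closed subsemigroup (closed under addition and
under suprema and infima of linearly ordered subsets), then the supremum of any
subset of `W` bounded above in `V` again lies in `W`; in particular every
wo-closed subspace is b-closed. -/
theorem wo_closed_subsemigroup_is_b_closed {K V : Type*} (F : IdemSemifield K)
    (hKb : F.BComplete) (M : IdemSpace K V F) (hM : M.IsBSpace)
    (W : Set V)
    (hWadd : ∀ x ∈ W, ∀ y ∈ W, M.add x y ∈ W)
    (hWwo : ∀ X : Set V, X ⊆ W → M.IsChain X →
      (∀ s, M.IsSup X s → s ∈ W) ∧ (∀ s, M.IsInf X s → s ∈ W)) :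
    ∀ X : Set V, X ⊆ W → (∃ b, M.IsUB X b) → ∀ s, M.IsSup X s → s ∈ W :=
  wo_closed_subsemigroup_is_b_closed_general F M hM W hWadd hWwo
end

section
/- Let V be an idempotent b-space over a b-complete semifield K and let x ∈ V be an Archimedean element. Then the functional x*(y) = inf { k ∈ K : k ⊙ x ≽ y } is well-defined, b-linear (x*(sup Y) = sup x*(Y) for bounded Y ⊆ V and x*(k ⊙ y) = k ⊙ x*(y)), and satisfies x*(y) ⊙ x ≽ y for every y ∈ V. -/
/-!
Since `V` is a b-space, `k ↦ k ⊙ x` carries the infimum `x*(y)` of `{k | k ⊙ x ≽ y}` to an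
infimum of the corresponding vectors, all of which dominate `y`; hence `x*(y) ⊙ x ≽ y`, i.e.
`x*(y)` is the least element of that set. Everything else follows formally: `x*` is monotone,
`y ≼ x*(y) ⊙ x ≼ b ⊙ x` for every upper bound `b` of `x*(Y)` gives preservation of suprema, and
`x*(k ⊙ y) ≼ k ⊙ x*(y)` applied to `k` and to `k⁻¹` gives homogeneity.
-/

namespace IdemSemifield

variable {K : Type*} (F : IdemSemifield K)

theorem zero_le (a : K) : F.le F.zero a := F.zero_add a

variable {F}

theorem le_antisymm {a b : K} (hab : F.le a b) (hba : F.le b a) : a = b := by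
  unfold le at *
  rw [← hab, F.add_comm, hba]

theorem mul_le_mul_left (k : K) {a b : K} (h : F.le a b) : F.le (F.mul k a) (F.mul k b) := by
  unfold le at *
  rw [← F.left_distrib, h]

theorem exists_isInf (hF : F.BComplete) {S : Set K} (hS : S.Nonempty) : ∃ i, F.IsInf S i := by
  obtain ⟨k, hk⟩ := hS
  obtain ⟨s, hs_ub, hs_least⟩ := hF {b | F.IsLB S b} ⟨k, fun _ hb => hb k hk⟩
  exact ⟨s, fun m hm => hs_least m fun _ hb => hb m hm, hs_ub⟩

end IdemSemifield

namespace IdemSpace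

variable {K V : Type*} {F : IdemSemifield K} {M : IdemSpace K V F}

theorem le_trans_s13 {u v w : V} (huv : M.le u v) (hvw : M.le v w) : M.le u w := by
  unfold le at *
  rw [← hvw, ← M.add_assoc, huv]

theorem smul_le_smul_left (k : K) {u v : V} (h : M.le u v) :
    M.le (M.smul k u) (M.smul k v) := by
  unfold le at *
  rw [← M.smul_add, h]

theorem smul_le_smul_right {a b : K} (v : V) (h : F.le a b) :
    M.le (M.smul a v) (M.smul b v) := by
  unfold le
  rw [← M.add_smul, h]

namespace IsStarOf

variable {x : V} {xs : V → K}

theorem le_of_le_smul (hxs : M.IsStarOf x xs) {y : V} {k : K} (h : M.le y (M.smul k x)) :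
    F.le (xs y) k :=
  (hxs y).1 k h

theorem monotone (hxs : M.IsStarOf x xs) {y y' : V} (h : M.le y y') : F.le (xs y) (xs y') :=
  (hxs y').2 (xs y) fun _ hk => hxs.le_of_le_smul (le_trans_s13 h hk)

theorem le_smul (hM : M.IsBSpace) (hxs : M.IsStarOf x xs) (hx : M.IsArchElem x) (y : V) :
    M.le y (M.smul (xs y) x) :=
  (hM.2.2 _ x (xs y) (hx y) (hxs y)).2 y <| by
    rintro _ ⟨k, hk, rfl⟩
    exact hk

theorem isSup_image (hM : M.IsBSpace) (hxs : M.IsStarOf x xs) (hx : M.IsArchElem x)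
    {Y : Set V} {s : V} (hs : M.IsSup Y s) : F.IsSup (xs '' Y) (xs s) := by
  refine ⟨?_, fun b hb => hxs.le_of_le_smul (hs.2 _ fun y hy => ?_)⟩
  · rintro _ ⟨y, hy, rfl⟩
    exact hxs.monotone (hs.1 y hy)
  · exact le_trans_s13 (hxs.le_smul hM hx y) (smul_le_smul_right x (hb _ ⟨y, hy, rfl⟩))

theorem le_mul (hM : M.IsBSpace) (hxs : M.IsStarOf x xs) (hx : M.IsArchElem x) (k : K)
    (y : V) : F.le (xs (M.smul k y)) (F.mul k (xs y)) := by
  apply hxs.le_of_le_smul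
  rw [← M.smul_smul]
  exact smul_le_smul_left k (hxs.le_smul hM hx y)

theorem smul (hM : M.IsBSpace) (hxs : M.IsStarOf x xs) (hx : M.IsArchElem x) (k : K)
    (y : V) : xs (M.smul k y) = F.mul k (xs y) := by
  refine F.le_antisymm (hxs.le_mul hM hx k y) ?_
  by_cases hk : k = F.zero
  · rw [hk, F.zero_mul]
    exact F.zero_le _
  obtain ⟨k', hkk', hk'k⟩ := F.inv_exists k hk
  have h := hxs.le_mul hM hx k' (M.smul k y)
  rw [M.smul_smul, hk'k, M.one_smul] at h
  have h' := IdemSemifield.mul_le_mul_left k h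
  rwa [← F.mul_assoc, hkk', F.one_mul] at h'

end IsStarOf

end IdemSpace

/-- if `x` is an Archimedean element of an idempotent b-space `V`
over a b-complete idempotent semifield `K`, then the functional
`x* (y) = inf {k : k ⊙ x ≽ y}` is well defined (the infimum exists), it is
b-linear (it preserves suprema of bounded subsets and is homogeneous), and
`x* (y) ⊙ x ≽ y` for all `y`. -/
theorem arch_element_star_functional {K V : Type*} (F : IdemSemifield K)
    (hKb : F.BComplete) (M : IdemSpace K V F) (hM : M.IsBSpace)
    (x : V) (hx : M.IsArchElem x) :
    -- the infimum defining `x*` exists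
    (∀ y : V, ∃ i : K, F.IsInf {k : K | M.le y (M.smul k x)} i) ∧
    -- and any function realizing it is b-linear and satisfies `x*(y) ⊙ x ≽ y`
    ∀ xs : V → K, M.IsStarOf x xs →
      (∀ (Y : Set V) (s : V), M.IsSup Y s → F.IsSup (xs '' Y) (xs s)) ∧
      (∀ (k : K) (y : V), xs (M.smul k y) = F.mul k (xs y)) ∧
      (∀ y : V, M.le y (M.smul (xs y) x)) := by
  refine ⟨fun y => F.exists_isInf hKb (hx y), fun xs hxs => ?_⟩
  exact ⟨fun _ _ hs => hxs.isSup_image hM hx hs, hxs.smul hM hx, hxs.le_smul hM hx⟩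
end

section
/- Every linear representation of a finite group G in an idempotent b-space V over a b-complete idempotent semifield, with V ≠ {0}, has a nonzero joint eigenvector with eigenvalue 1: there exists a ≠ 0 with π(g)a = a for all g ∈ G. -/
/-!
The supremum of a finite orbit `π(G)x` exists by b-completeness, and it is fixed by each `π(g)`:
`π(g)` permutes the orbit and preserves suprema. It is nonzero because it dominates `x = π(1)x`.
-/

namespace IdemSpace
variable {K V : Type*} {F : IdemSemifield K} (M : IdemSpace K V F)

theorem le_antisymm_s16 {u v : V} (huv : M.le u v) (hvu : M.le v u) : u = v :=
  calc u = M.add v u := hvu.symm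
    _ = M.add u v := M.add_comm v u
    _ = v := huv

theorem IsSup.unique {M : IdemSpace K V F} {X : Set V} {s t : V} (hs : M.IsSup X s)
    (ht : M.IsSup X t) : s = t :=
  M.le_antisymm_s16 (hs.2 t ht.1) (ht.2 s hs.1)

theorem eq_zero_of_le_zero {x : V} (hx : M.le x M.zero) : x = M.zero :=
  calc x = M.add M.zero x := (M.zero_add x).symm
    _ = M.add x M.zero := M.add_comm _ _
    _ = M.zero := hx

theorem exists_isUB_of_finite {T : Set V} (hT : T.Finite) : ∃ b, M.IsUB T b := by
  induction T, hT using Set.Finite.induction_on with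
  | empty => exact ⟨M.zero, fun y hy => absurd hy (Set.notMem_empty y)⟩
  | @insert c s _ _ ih =>
    obtain ⟨b, hb⟩ := ih
    refine ⟨M.add c b, fun y hy => ?_⟩
    rcases hy with rfl | hy
    · show M.add y (M.add y b) = M.add y b
      rw [← M.add_assoc, M.add_idem]
    · show M.add y (M.add c b) = M.add c b
      rw [M.add_comm c b, ← M.add_assoc, hb y hy]

theorem exists_isSup_of_finite (hM : M.IsBSpace) {T : Set V} (hT : T.Finite) :
    ∃ s, M.IsSup T s :=
  hM.1 T (M.exists_isUB_of_finite hT)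

theorem IsBLinear.map_isSup_eq {M : IdemSpace K V F} {f : V → V} (hf : M.IsBLinear f)
    {S : Set V} {a : V} (hS : f '' S = S) (ha : M.IsSup S a) : f a = a :=
  IsSup.unique (hS ▸ hf.1 S a ha) ha

end IdemSpace

section Orbit
variable {G α : Type*} [Group G] {π : G → α → α}

theorem map_one_eq_id_of_injective (hmul : ∀ g h, π (g * h) = π g ∘ π h)
    (hinj : Function.Injective (π 1)) : π 1 = id :=
  funext fun v => (hinj (by simpa using congrFun (hmul 1 1) v)).symm

theorem image_range_orbit (hmul : ∀ g h, π (g * h) = π g ∘ π h) (g : G) (x : α) :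
    π g '' Set.range (fun h => π h x) = Set.range (fun h => π h x) := by
  rw [← Set.range_comp]
  calc Set.range (π g ∘ fun h => π h x) = Set.range ((fun h => π h x) ∘ (g * ·)) := by
        simp only [Function.comp_def, hmul]
    _ = Set.range (fun h => π h x) := (mul_left_surjective g).range_comp _

end Orbit

theorem finite_group_rep_fixed_vector_general {K V : Type*} {G : Type*} [Group G] [Finite G]
    (F : IdemSemifield K)
    (M : IdemSpace K V F) (hM : M.IsBSpace)
    (π : G → V → V)
    (hbij : ∀ g, Function.Bijective (π g))
    (hlin : ∀ g, M.IsBLinear (π g))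
    (hmul : ∀ g h, π (g * h) = π g ∘ π h)
    (hV : ∃ v : V, v ≠ M.zero) :
    ∃ a : V, a ≠ M.zero ∧ ∀ g : G, π g a = a := by
  obtain ⟨x, hx⟩ := hV
  obtain ⟨a, ha⟩ := M.exists_isSup_of_finite hM (Set.finite_range fun g => π g x)
  have hx_mem : x ∈ Set.range fun g => π g x :=
    ⟨1, congrFun (map_one_eq_id_of_injective hmul (hbij 1).1) x⟩
  refine ⟨a, fun ha0 => hx (M.eq_zero_of_le_zero (ha0 ▸ ha.1 x hx_mem)), fun g => ?_⟩
  exact (hlin g).map_isSup_eq (image_range_orbit hmul g x) ha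

/-- every linear representation of a finite group `G` in a
nonzero idempotent b-space `V` over a b-complete idempotent semifield has a
nonzero joint eigenvector with eigenvalue `1`: there is `a ≠ 0` with
`π(g)a = a` for all `g ∈ G`. -/
theorem finite_group_rep_fixed_vector {K V : Type*} {G : Type*} [Group G] [Finite G]
    (F : IdemSemifield K) (hKb : F.BComplete)
    (M : IdemSpace K V F) (hM : M.IsBSpace)
    (π : G → V → V)
    (hbij : ∀ g, Function.Bijective (π g))
    (hlin : ∀ g, M.IsBLinear (π g))
    (hmul : ∀ g h, π (g * h) = π g ∘ π h)
    (hV : ∃ v : V, v ≠ M.zero) :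
    ∃ a : V, a ≠ M.zero ∧ ∀ g : G, π g a = a :=
  finite_group_rep_fixed_vector_general F M hM π hbij hlin hmul hV
end
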